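/- arXiv:math/0309469 — 6 statements merged into one kernel-verified Lean document; each statement's English description precedes it below -/
import Mathlib

section
/- Let v, w ∈ ℂ² be nonzero vectors. There exist g ∈ SL(2,ℝ) and λ ∈ ℂˣ with g ⋅ v = λ • w if and only if the signs of τ(v) and τ(w) agree, i.e. Real.sign (τ(v)) = Real.sign (τ(w)). (Equivalently: τ(v) > 0 ∧ τ(w) > 0, or τ(v) < 0 ∧ τ(w) < 0, or τ(v) = 0 ∧ τ(w) = 0.) -/
open Matrix

/-- `τ(v) = Im (v₀ * conj v₁)` for `v ∈ ℂ²`. -/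
noncomputable def tau (v : Fin 2 → ℂ) : ℝ := (v 0 * (starRingEnd ℂ) (v 1)).im

/-- The action of a real `2×2` matrix on `ℂ²`: map the entries into `ℂ`
and take matrix–vector multiplication. -/
noncomputable def actR (g : Matrix (Fin 2) (Fin 2) ℝ) (v : Fin 2 → ℂ) : Fin 2 → ℂ :=
  (g.map (Complex.ofReal ·)) *ᵥ v

namespace SL2Aux

lemma actR_apply (g : Matrix (Fin 2) (Fin 2) ℝ) (v : Fin 2 → ℂ) (i : Fin 2) :
    actR g v i = (g i 0 : ℂ) * v 0 + (g i 1 : ℂ) * v 1 := by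
  simp [actR, Matrix.mulVec, dotProduct, Fin.sum_univ_two, Matrix.map_apply]

lemma actR_of (a b c d : ℝ) (v : Fin 2 → ℂ) :
    actR !![a, b; c, d] v =
      ![(a : ℂ) * v 0 + (b : ℂ) * v 1, (c : ℂ) * v 0 + (d : ℂ) * v 1] := by
  funext i
  fin_cases i <;> simp [actR_apply]

lemma actR_mul (g h : Matrix (Fin 2) (Fin 2) ℝ) (v : Fin 2 → ℂ) :
    actR (g * h) v = actR g (actR h v) := by
  funext i
  simp only [actR_apply, Matrix.mul_apply, Fin.sum_univ_two]
  push_cast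
  ring

lemma actR_smul (g : Matrix (Fin 2) (Fin 2) ℝ) (l : ℂ) (v : Fin 2 → ℂ) :
    actR g (l • v) = l • actR g v := by
  funext i
  simp only [actR_apply, Pi.smul_apply, smul_eq_mul]
  ring

lemma actR_one (v : Fin 2 → ℂ) : actR 1 v = v := by
  funext i
  fin_cases i <;> simp [actR_apply, Matrix.one_apply]

lemma tau_actR (g : Matrix (Fin 2) (Fin 2) ℝ) (v : Fin 2 → ℂ) :
    tau (actR g v) = g.det * tau v := by
  simp only [tau, actR_apply, map_add, _root_.map_mul, Complex.conj_ofReal,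
    Matrix.det_fin_two]
  simp only [Complex.add_im, Complex.mul_im, Complex.add_re, Complex.mul_re,
    Complex.ofReal_re, Complex.ofReal_im, Complex.conj_re, Complex.conj_im]
  ring

lemma tau_smul (l : ℂ) (w : Fin 2 → ℂ) : tau (l • w) = Complex.normSq l * tau w := by
  simp only [tau, Pi.smul_apply, smul_eq_mul, _root_.map_mul]
  rw [mul_mul_mul_comm, Complex.mul_conj]
  simp [Complex.mul_im]

/-- The orbit relation. -/
def Rel (v w : Fin 2 → ℂ) : Prop :=
  ∃ (g : Matrix.SpecialLinearGroup (Fin 2) ℝ) (l : ℂˣ),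
    actR (g : Matrix (Fin 2) (Fin 2) ℝ) v = (l : ℂ) • w

lemma Rel.symm {v w : Fin 2 → ℂ} (h : Rel v w) : Rel w v := by
  obtain ⟨g, l, h⟩ := h
  refine ⟨g⁻¹, l⁻¹, ?_⟩
  have h2 := congrArg (actR ((g⁻¹ : Matrix.SpecialLinearGroup (Fin 2) ℝ) :
    Matrix (Fin 2) (Fin 2) ℝ)) h
  rw [← actR_mul, ← Matrix.SpecialLinearGroup.coe_mul, inv_mul_cancel,
    Matrix.SpecialLinearGroup.coe_one, actR_one, actR_smul] at h2
  rw [h2, smul_smul]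
  simp

lemma Rel.trans {v w u : Fin 2 → ℂ} (h1 : Rel v w) (h2 : Rel w u) : Rel v u := by
  obtain ⟨g, l, h1⟩ := h1
  obtain ⟨k, m, h2⟩ := h2
  refine ⟨k * g, l * m, ?_⟩
  rw [Matrix.SpecialLinearGroup.coe_mul, actR_mul, h1, actR_smul, h2, smul_smul,
    Units.val_mul]

lemma tau_eq {v : Fin 2 → ℂ} (z : ℂ) (hz : v 0 = z * v 1) :
    tau v = z.im * Complex.normSq (v 1) := by
  rw [tau, hz, mul_assoc, Complex.mul_conj]
  simp [Complex.mul_im]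

lemma v1_ne_zero {v : Fin 2 → ℂ} (h : tau v ≠ 0) : v 1 ≠ 0 := by
  intro h0
  rw [tau, h0] at h
  simp at h

lemma rel_pos {v : Fin 2 → ℂ} (h : 0 < tau v) : Rel v ![Complex.I, 1] := by
  have hv1 : v 1 ≠ 0 := v1_ne_zero h.ne'
  obtain ⟨x, y, hxy, hy⟩ : ∃ x y : ℝ, v 0 = ((x : ℂ) + (y : ℂ) * Complex.I) * v 1 ∧ 0 < y := by
    refine ⟨(v 0 / v 1).re, (v 0 / v 1).im, ?_, ?_⟩
    · rw [Complex.re_add_im]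
      exact (div_mul_cancel₀ _ hv1).symm
    · have htau : tau v = (v 0 / v 1).im * Complex.normSq (v 1) :=
        tau_eq _ (div_mul_cancel₀ _ hv1).symm
      have hns : 0 < Complex.normSq (v 1) := Complex.normSq_pos.mpr hv1
      nlinarith
  obtain ⟨s, hs, hss⟩ : ∃ s : ℝ, 0 < s ∧ s * s = y :=
    ⟨Real.sqrt y, Real.sqrt_pos.mpr hy, Real.mul_self_sqrt hy.le⟩
  have hssC : (s : ℂ) * s = (y : ℂ) := by exact_mod_cast hss
  have hsC : (s : ℂ) ≠ 0 := Complex.ofReal_ne_zero.mpr hs.ne'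
  refine ⟨⟨!![1/s, -x/s; 0, s], by
      rw [Matrix.det_fin_two_of]; field_simp; ring⟩,
    Units.mk0 ((s : ℂ) * v 1) (mul_ne_zero hsC hv1), ?_⟩
  rw [Matrix.SpecialLinearGroup.coe_mk, actR_of]
  funext i
  fin_cases i
  · simp only [Matrix.cons_val_zero, Units.val_mk0, Pi.smul_apply, smul_eq_mul,
      Fin.zero_eta, Fin.isValue]
    push_cast
    field_simp
    linear_combination hxy - Complex.I * v 1 * hssC
  · simp

lemma rel_neg {v : Fin 2 → ℂ} (h : tau v < 0) : Rel v ![-Complex.I, 1] := by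
  have hv1 : v 1 ≠ 0 := v1_ne_zero h.ne
  obtain ⟨x, y, hxy, hy⟩ : ∃ x y : ℝ, v 0 = ((x : ℂ) + (y : ℂ) * Complex.I) * v 1 ∧ y < 0 := by
    refine ⟨(v 0 / v 1).re, (v 0 / v 1).im, ?_, ?_⟩
    · rw [Complex.re_add_im]
      exact (div_mul_cancel₀ _ hv1).symm
    · have htau : tau v = (v 0 / v 1).im * Complex.normSq (v 1) :=
        tau_eq _ (div_mul_cancel₀ _ hv1).symm
      have hns : 0 < Complex.normSq (v 1) := Complex.normSq_pos.mpr hv1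
      nlinarith
  obtain ⟨s, hs, hss⟩ : ∃ s : ℝ, 0 < s ∧ s * s = -y :=
    ⟨Real.sqrt (-y), Real.sqrt_pos.mpr (by linarith), Real.mul_self_sqrt (by linarith)⟩
  have hssC : (s : ℂ) * s = -(y : ℂ) := by exact_mod_cast hss
  have hsC : (s : ℂ) ≠ 0 := Complex.ofReal_ne_zero.mpr hs.ne'
  refine ⟨⟨!![1/s, -x/s; 0, s], by
      rw [Matrix.det_fin_two_of]; field_simp; ring⟩,
    Units.mk0 ((s : ℂ) * v 1) (mul_ne_zero hsC hv1), ?_⟩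
  rw [Matrix.SpecialLinearGroup.coe_mk, actR_of]
  funext i
  fin_cases i
  · simp only [Matrix.cons_val_zero, Units.val_mk0, Pi.smul_apply, smul_eq_mul,
      Fin.zero_eta, Fin.isValue]
    push_cast
    field_simp
    linear_combination hxy + Complex.I * v 1 * hssC
  · simp

lemma rel_zero {v : Fin 2 → ℂ} (hv : v ≠ 0) (h : tau v = 0) : Rel v ![1, 0] := by
  by_cases hv1 : v 1 = 0
  · have hv0 : v 0 ≠ 0 := by
      intro h0
      apply hv
      funext i
      fin_cases i
      · exact h0
      · exact hv1
    refine ⟨1, Units.mk0 (v 0) hv0, ?_⟩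
    rw [Matrix.SpecialLinearGroup.coe_one, actR_one]
    funext i
    fin_cases i <;> simp [hv1]
  · obtain ⟨x, hx⟩ : ∃ x : ℝ, v 0 = (x : ℂ) * v 1 := by
      refine ⟨(v 0 / v 1).re, ?_⟩
      have hz : v 0 = (v 0 / v 1) * v 1 := (div_mul_cancel₀ _ hv1).symm
      have htau : tau v = (v 0 / v 1).im * Complex.normSq (v 1) := tau_eq _ hz
      have hns : 0 < Complex.normSq (v 1) := Complex.normSq_pos.mpr hv1
      have hy : (v 0 / v 1).im = 0 := by
        rcases mul_eq_zero.mp (htau ▸ h) with h1 | h1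
        · exact h1
        · exact absurd h1 hns.ne'
      have : (v 0 / v 1) = ((v 0 / v 1).re : ℂ) := by
        apply Complex.ext <;> simp [hy]
      rw [← this]
      exact hz
    refine ⟨⟨!![0, 1; -1, x], by rw [Matrix.det_fin_two_of]; ring⟩,
      Units.mk0 (v 1) hv1, ?_⟩
    rw [Matrix.SpecialLinearGroup.coe_mk, actR_of]
    funext i
    fin_cases i
    · simp
    · simp only [Matrix.cons_val_one, Matrix.head_cons, Units.val_mk0, Pi.smul_apply,
        smul_eq_mul, Fin.mk_one, Fin.isValue]
      simp
      linear_combination -hx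

lemma sign_mul_pos {c : ℝ} (hc : 0 < c) (x : ℝ) : Real.sign (c * x) = Real.sign x := by
  rcases lt_trichotomy x 0 with h | h | h
  · rw [Real.sign_of_neg h, Real.sign_of_neg (mul_neg_of_pos_of_neg hc h)]
  · simp [h]
  · rw [Real.sign_of_pos h, Real.sign_of_pos (mul_pos hc h)]

end SL2Aux

open SL2Aux in
/-- For nonzero `v, w ∈ ℂ²`, there exist `g ∈ SL(2,ℝ)` and `λ ∈ ℂˣ` with
`g ⋅ v = λ • w` iff the signs of `τ(v)` and `τ(w)` agree. -/
theorem sl2R_orbits_on_P1C (v w : Fin 2 → ℂ) (hv : v ≠ 0) (hw : w ≠ 0) :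
    (∃ (g : Matrix.SpecialLinearGroup (Fin 2) ℝ) (l : ℂˣ),
        actR (g : Matrix (Fin 2) (Fin 2) ℝ) v = (l : ℂ) • w) ↔
      Real.sign (tau v) = Real.sign (tau w) := by
  constructor
  · rintro ⟨g, l, h⟩
    have ht := congrArg tau h
    rw [tau_actR, tau_smul, g.2, one_mul] at ht
    have hl : 0 < Complex.normSq (l : ℂ) := Complex.normSq_pos.mpr l.ne_zero
    rw [ht, sign_mul_pos hl]
  · intro h
    have hR : Rel v w := by
      rcases lt_trichotomy (tau v) 0 with h1 | h1 | h1
      · have h2 : tau w < 0 := by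
          rcases lt_trichotomy (tau w) 0 with h2 | h2 | h2
          · exact h2
          · rw [Real.sign_of_neg h1, h2, Real.sign_zero] at h; norm_num at h
          · rw [Real.sign_of_neg h1, Real.sign_of_pos h2] at h; norm_num at h
        exact (rel_neg h1).trans (rel_neg h2).symm
      · have h2 : tau w = 0 := by
          rcases lt_trichotomy (tau w) 0 with h2 | h2 | h2
          · rw [h1, Real.sign_zero, Real.sign_of_neg h2] at h; norm_num at h
          · exact h2
          · rw [h1, Real.sign_zero, Real.sign_of_pos h2] at h; norm_num at h
        exact (rel_zero hv h1).trans (rel_zero hw h2).symm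
      · have h2 : 0 < tau w := by
          rcases lt_trichotomy (tau w) 0 with h2 | h2 | h2
          · rw [Real.sign_of_pos h1, Real.sign_of_neg h2] at h; norm_num at h
          · rw [Real.sign_of_pos h1, h2, Real.sign_zero] at h; norm_num at h
          · exact h2
        exact (rel_pos h1).trans (rel_pos h2).symm
    exact hR
end

section
/- Every subset C of ℂ² ∖ {0} that is closed in the subspace topology of ℂ² ∖ {0}, invariant under scalar multiplication by ℂˣ, and invariant under the action of SL(2,ℝ) (i.e. g ⋅ v ∈ C for all g ∈ SL(2,ℝ), v ∈ C) is preconnected. -/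
open Matrix

/-!
The fibre `L = {(0, w) | w ≠ 0}` over `[0 : 1] ∈ P¹(ℂ)` is connected, and every point `y` of `C`
is joined to `L` by a path inside `C`: if `y₁ = 0`, by the rotation arc `R_θ y`, `0 ≤ θ ≤ π/2`;
otherwise by the segment `(t y₀, y₁)`, `0 ≤ t ≤ 1`. Its points with `t > 0` are the multiples
`√t · diag(√t, 1/√t) y`, and its endpoint `(0, y₁)` lies in `C` because `C` is closed in
`ℂ² ∖ {0}`. So `C` meets `L`, hence contains it by `ℂˣ`-stability, and `C` is the union of `L`
with preconnected sets meeting `L`.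
-/

open Set Filter Topology Real

def IsScalarStable (C : Set (Fin 2 → ℂ)) : Prop :=
  ∀ l : ℂˣ, ∀ v ∈ C, (l : ℂ) • v ∈ C

def IsSL2RStable (C : Set (Fin 2 → ℂ)) : Prop :=
  ∀ g : SpecialLinearGroup (Fin 2) ℝ, ∀ v ∈ C, actR (g : Matrix (Fin 2) (Fin 2) ℝ) v ∈ C

def puncturedAxis : Set (Fin 2 → ℂ) := (fun w : ℂ => ![0, w]) '' {0}ᶜ

lemma actR_of (a b c d : ℝ) (v : Fin 2 → ℂ) :
    actR !![a, b; c, d] v = ![a * v 0 + b * v 1, c * v 0 + d * v 1] := by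
  ext i; fin_cases i <;> simp [actR, mulVec, dotProduct, Fin.sum_univ_two]

lemma isPreconnected_puncturedAxis : IsPreconnected puncturedAxis :=
  (isConnected_compl_singleton_of_one_lt_rank (by simp [Complex.rank_real_complex]) _
    |>.isPreconnected.image _ (by fun_prop : Continuous fun w : ℂ => ![0, w]).continuousOn)

section

variable {C : Set (Fin 2 → ℂ)} {y : Fin 2 → ℂ}

lemma IsScalarStable.puncturedAxis_subset (hscal : IsScalarStable C)
    (h : (C ∩ puncturedAxis).Nonempty) : puncturedAxis ⊆ C := by
  obtain ⟨-, hC, w, hw, rfl⟩ := h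
  rintro - ⟨w', hw', rfl⟩
  have hw : w ≠ 0 := hw
  convert hscal (Units.mk0 (w' / w) (div_ne_zero hw' hw)) _ hC using 1
  ext i; fin_cases i <;> simp [hw]

lemma stretch_mem (hscal : IsScalarStable C) (hsl : IsSL2RStable C) (hy : y ∈ C) {t : ℝ}
    (ht : 0 < t) : ![(t : ℂ) * y 0, y 1] ∈ C := by
  set s := √t
  have hs : s ≠ 0 := (Real.sqrt_pos.2 ht).ne'
  have hdiag : actR !![s, 0; 0, s⁻¹] y ∈ C :=
    hsl ⟨!![s, 0; 0, s⁻¹], by simp [det_fin_two_of, hs]⟩ y hy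
  -- `s • diag(s, s⁻¹) = diag(t, 1)`
  convert hscal (Units.mk0 (s : ℂ) (by exact_mod_cast hs)) _ hdiag using 1
  rw [actR_of]
  have hst : (t : ℂ) = s * s := by exact_mod_cast (Real.mul_self_sqrt ht.le).symm
  ext i; fin_cases i <;> simp [hst, hs, mul_assoc]

lemma stretch_zero_mem
    (hclosed : IsClosed ((Subtype.val ⁻¹' C) : Set {v : Fin 2 → ℂ // v ≠ 0}))
    (hscal : IsScalarStable C) (hsl : IsSL2RStable C) (hy : y ∈ C) (hy1 : y 1 ≠ 0) :
    ![0, y 1] ∈ C := by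
  have hne (t : ℝ) : ![(t : ℂ) * y 0, y 1] ≠ 0 := fun h => hy1 (by simpa using congr_fun h 1)
  let stretch (t : ℝ) : {v : Fin 2 → ℂ // v ≠ 0} := ⟨![(t : ℂ) * y 0, y 1], hne t⟩
  have hlim : Tendsto stretch (𝓝[>] 0) (𝓝 (stretch 0)) :=
    (by fun_prop : Continuous stretch).continuousAt.tendsto.mono_left nhdsWithin_le_nhds
  simpa [stretch] using hclosed.mem_of_tendsto hlim
    (eventually_nhdsWithin_of_forall fun t ht => stretch_mem hscal hsl hy ht)

lemma rotate_mem (hsl : IsSL2RStable C) (hy : y ∈ C) (θ : ℝ) :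
    ![cos θ * y 0 - sin θ * y 1, sin θ * y 0 + cos θ * y 1] ∈ C := by
  have hrot : actR !![cos θ, -sin θ; sin θ, cos θ] y ∈ C :=
    hsl ⟨!![cos θ, -sin θ; sin θ, cos θ], by simp [det_fin_two_of, ← sq]⟩ y hy
  rw [actR_of] at hrot
  simpa [sub_eq_add_neg] using hrot

lemma exists_isPreconnected_joining_puncturedAxis (hC0 : C ⊆ {v : Fin 2 → ℂ | v ≠ 0})
    (hclosed : IsClosed ((Subtype.val ⁻¹' C) : Set {v : Fin 2 → ℂ // v ≠ 0}))
    (hscal : IsScalarStable C) (hsl : IsSL2RStable C) (hy : y ∈ C) :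
    ∃ P ⊆ C, y ∈ P ∧ (P ∩ puncturedAxis).Nonempty ∧ IsPreconnected P := by
  by_cases hy1 : y 1 = 0
  · have hy0 : y 0 ≠ 0 := fun h0 => hC0 hy (by ext i; fin_cases i <;> simp [h0, hy1])
    let rotate (θ : ℝ) : Fin 2 → ℂ := ![cos θ * y 0 - sin θ * y 1, sin θ * y 0 + cos θ * y 1]
    refine ⟨rotate '' Icc 0 (π / 2), ?_, ⟨0, ⟨le_rfl, by positivity⟩, ?_⟩, ?_, ?_⟩
    · rintro - ⟨θ, -, rfl⟩
      exact rotate_mem hsl hy θ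
    · ext i; fin_cases i <;> simp [rotate]
    · exact ⟨rotate (π / 2), ⟨π / 2, ⟨by positivity, le_rfl⟩, rfl⟩, y 0, hy0, by simp [rotate, hy1]⟩
    · exact isPreconnected_Icc.image _ (by fun_prop : Continuous rotate).continuousOn
  · let stretch (t : ℝ) : Fin 2 → ℂ := ![(t : ℂ) * y 0, y 1]
    refine ⟨stretch '' Icc 0 1, ?_, ⟨1, ⟨zero_le_one, le_rfl⟩, ?_⟩, ?_, ?_⟩
    · rintro - ⟨t, ⟨ht, -⟩, rfl⟩
      rcases ht.eq_or_lt with rfl | ht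
      · simpa [stretch] using stretch_zero_mem hclosed hscal hsl hy hy1
      · exact stretch_mem hscal hsl hy ht
    · ext i; fin_cases i <;> simp [stretch]
    · exact ⟨stretch 0, ⟨0, ⟨le_rfl, zero_le_one⟩, rfl⟩, y 1, hy1, by simp [stretch]⟩
    · exact isPreconnected_Icc.image _ (by fun_prop : Continuous stretch).continuousOn

end

/-- Every subset of `ℂ² ∖ {0}` that is closed in the subspace topology,
`ℂˣ`-stable and `SL(2,ℝ)`-stable is preconnected (Corollary 2.3 for a
noncompact or real simple root). -/
theorem closed_sl2R_invariant_preconnected (C : Set (Fin 2 → ℂ))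
    (hC0 : C ⊆ {v : Fin 2 → ℂ | v ≠ 0})
    (hclosed : IsClosed ((Subtype.val ⁻¹' C) : Set {v : Fin 2 → ℂ // v ≠ 0}))
    (hscal : ∀ (l : ℂˣ), ∀ v ∈ C, (l : ℂ) • v ∈ C)
    (hsl : ∀ (g : Matrix.SpecialLinearGroup (Fin 2) ℝ), ∀ v ∈ C,
        actR (g : Matrix (Fin 2) (Fin 2) ℝ) v ∈ C) :
    IsPreconnected C := by
  rcases C.eq_empty_or_nonempty with rfl | ⟨y₀, hy₀⟩
  · exact isPreconnected_empty
  have hjoin := fun {y} (hy : y ∈ C) =>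
    exists_isPreconnected_joining_puncturedAxis hC0 hclosed hscal hsl hy
  have haxis : puncturedAxis ⊆ C := by
    obtain ⟨P, hPC, -, ⟨w, hwP, hwL⟩, -⟩ := hjoin hy₀
    exact IsScalarStable.puncturedAxis_subset hscal ⟨w, hPC hwP, hwL⟩
  have he₂ : ![0, 1] ∈ puncturedAxis := ⟨1, one_ne_zero, rfl⟩
  refine isPreconnected_of_forall ![0, 1] fun y hy => ?_
  obtain ⟨P, hPC, hyP, hPL, hP⟩ := hjoin hy
  exact ⟨puncturedAxis ∪ P, union_subset haxis hPC, Or.inl he₂, Or.inr hyP,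
    isPreconnected_puncturedAxis.union' (by rwa [inter_comm]) hP⟩
end

section
/- Every subset C of ℂ² ∖ {0} that is closed in the subspace topology of ℂ² ∖ {0}, invariant under scalar multiplication by ℂˣ, and invariant under all upper triangular matrices g ∈ SL(2,ℂ) (those with g 1 0 = 0) is preconnected. -/
open Matrix Topology

/-- Every subset of `ℂ² ∖ {0}` that is closed in the subspace topology,
`ℂˣ`-stable and stable under all upper triangular matrices in `SL(2,ℂ)`
is preconnected (Corollary 2.3 for a complex simple root). -/
theorem closed_borel_invariant_preconnected (C : Set (Fin 2 → ℂ))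
    (hC0 : C ⊆ {v : Fin 2 → ℂ | v ≠ 0})
    (hclosed : IsClosed ((Subtype.val ⁻¹' C) : Set {v : Fin 2 → ℂ // v ≠ 0}))
    (hscal : ∀ (l : ℂˣ), ∀ v ∈ C, (l : ℂ) • v ∈ C)
    (hborel : ∀ (g : Matrix.SpecialLinearGroup (Fin 2) ℂ),
        (g : Matrix (Fin 2) (Fin 2) ℂ) 1 0 = 0 → ∀ v ∈ C,
          (g : Matrix (Fin 2) (Fin 2) ℂ) *ᵥ v ∈ C) :
    IsPreconnected C := by
  rcases Set.eq_empty_or_nonempty C with hE | ⟨v0, hv0⟩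
  · rw [hE]; exact isPreconnected_empty
  by_cases hop : ∃ v ∈ C, v 1 ≠ 0
  · obtain ⟨v, hv, hv1⟩ := hop
    have horb : ∀ w : Fin 2 → ℂ, w 1 ≠ 0 → w ∈ C := by
      intro w hw1
      set a : ℂ := v 1 / w 1 with ha_def
      have ha : a ≠ 0 := div_ne_zero hv1 hw1
      set b : ℂ := (w 0 - a * v 0) / v 1 with hb_def
      have hdet : Matrix.det ![![a, b], ![0, a⁻¹]] = 1 := by
        refine (Matrix.det_fin_two (A := (![![a, b], ![0, a⁻¹]] : Matrix (Fin 2) (Fin 2) ℂ))).trans ?_; simp [mul_inv_cancel₀ ha]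
      have hg : ((⟨![![a, b], ![0, a⁻¹]], hdet⟩ : Matrix.SpecialLinearGroup (Fin 2) ℂ) :
          Matrix (Fin 2) (Fin 2) ℂ) 1 0 = 0 := by simp
      have hmem := hborel ⟨![![a, b], ![0, a⁻¹]], hdet⟩ hg v hv
      have key : (![![a, b], ![0, a⁻¹]] : Matrix (Fin 2) (Fin 2) ℂ) *ᵥ v = w := by
        funext i
        fin_cases i <;>
          simp [Matrix.mulVec, dotProduct, Fin.sum_univ_two, ha_def, hb_def] <;>
          field_simp <;> ring
      rwa [key] at hmem
    have hCeq : C = {v : Fin 2 → ℂ | v ≠ 0} := by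
      apply Set.Subset.antisymm hC0
      intro w hw
      by_cases hw1 : w 1 = 0
      · let u : ℕ → (Fin 2 → ℂ) := fun n => ![w 0, ((n : ℂ) + 1)⁻¹]
        have hun1 : ∀ n, u n 1 ≠ 0 := by
          intro n
          simp only [u, Matrix.cons_val_one, Matrix.head_cons]
          refine inv_ne_zero ?_
          have h : ((n + 1 : ℕ) : ℂ) ≠ 0 := Nat.cast_ne_zero.mpr n.succ_ne_zero
          push_cast at h
          exact h
        have hu : ∀ n, u n ∈ C := fun n => horb _ (hun1 n)
        have hun : ∀ n, u n ≠ 0 := fun n => hC0 (hu n)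
        have hseq : Filter.Tendsto (fun n : ℕ => ((n : ℂ) + 1)⁻¹) Filter.atTop (𝓝 0) := by
          have h1 : Filter.Tendsto (fun n : ℕ => (((n : ℝ) + 1)⁻¹ : ℝ)) Filter.atTop (𝓝 0) := by
            simpa [one_div] using tendsto_one_div_add_atTop_nhds_zero_nat (𝕜 := ℝ)
          have h2 := (Complex.continuous_ofReal.tendsto 0).comp h1
          rw [Complex.ofReal_zero] at h2
          convert h2 using 1
          funext n
          simp only [Function.comp_apply]
          push_cast
          ring
        have hlim : Filter.Tendsto u Filter.atTop (𝓝 w) := by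
          rw [tendsto_pi_nhds]
          intro i
          fin_cases i
          · simpa [u] using (tendsto_const_nhds : Filter.Tendsto (fun _ : ℕ => w 0) _ _)
          · simpa [u, hw1] using hseq
        have hlim' : Filter.Tendsto (fun n => (⟨u n, hun n⟩ : {v : Fin 2 → ℂ // v ≠ 0}))
            Filter.atTop (𝓝 ⟨w, hw⟩) := tendsto_subtype_rng.2 hlim
        exact hclosed.mem_of_tendsto hlim' (Filter.Eventually.of_forall fun n => hu n)
      · exact horb w hw1
    rw [hCeq]
    have heq : {v : Fin 2 → ℂ | v ≠ 0} = ({0}ᶜ : Set (Fin 2 → ℂ)) := rfl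
    rw [heq]
    have hrank : 1 < Module.rank ℝ (Fin 2 → ℂ) := by
      rw [← Module.finrank_eq_rank]
      have : Module.finrank ℝ (Fin 2 → ℂ) = 4 := by
        simp [Module.finrank_pi_fintype, Complex.finrank_real_complex]
      rw [this]; norm_num
    exact (isPathConnected_compl_singleton_of_one_lt_rank hrank 0).isConnected.isPreconnected
  · push_neg at hop
    have hCeq : C = (fun c : ℂ => ![c, (0 : ℂ)]) '' {c : ℂ | c ≠ 0} := by
      apply Set.Subset.antisymm
      · intro w hw
        refine ⟨w 0, ?_, ?_⟩
        · intro h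
          apply hC0 hw
          funext i
          fin_cases i
          · exact h
          · exact hop w hw
        · funext i
          fin_cases i
          · simp
          · simpa using (hop w hw).symm
      · rintro _ ⟨c, hc, rfl⟩
        have hv01 : v0 1 = 0 := hop v0 hv0
        have hv00 : v0 0 ≠ 0 := by
          intro h
          apply hC0 hv0
          funext i
          fin_cases i
          · exact h
          · exact hv01
        have hl : c / v0 0 ≠ 0 := div_ne_zero hc hv00
        have := hscal (Units.mk0 _ hl) v0 hv0
        simp only [Units.val_mk0] at this
        have key : (c / v0 0 : ℂ) • v0 = ![c, (0 : ℂ)] := by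
          funext i
          fin_cases i
          · simp [Pi.smul_apply]; field_simp
          · simp [Pi.smul_apply, hv01]
        rwa [key] at this
    rw [hCeq]
    have hpre : IsPreconnected {c : ℂ | c ≠ 0} := by
      have heq : {c : ℂ | c ≠ 0} = ({0}ᶜ : Set ℂ) := rfl
      rw [heq]
      have hrank : 1 < Module.rank ℝ ℂ := by
        rw [← Module.finrank_eq_rank, Complex.finrank_real_complex]; norm_num
      exact (isPathConnected_compl_singleton_of_one_lt_rank hrank 0).isConnected.isPreconnected
    apply hpre.image
    apply Continuous.continuousOn
    apply continuous_pi
    intro i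
    fin_cases i
    · simpa using continuous_id'
    · simpa using (continuous_const : Continuous fun _ : ℂ => (0 : ℂ))
end

section
/- The closure, inside the subspace ℂ² ∖ {0}, of the set {v ∈ ℂ² ∖ {0} : τ(v) > 0} equals {v ∈ ℂ² ∖ {0} : τ(v) ≥ 0}. Likewise the closure of {v : τ(v) < 0} equals {v : τ(v) ≤ 0}. -/
/-! `τ` is continuous, so the closures are contained in `{τ ≥ 0}` and `{τ ≤ 0}`. Conversely,
`w = v + iε (v₁, -v₀)` has `τ(w) = (1 + ε²) τ(v) + ε (|v₀|² + |v₁|²)`, so for `v ≠ 0` with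
`τ(v) ≥ 0` (resp. `≤ 0`) letting `ε → 0⁺` (resp. `ε → 0⁻`) approximates `v` by points with
`τ > 0` (resp. `< 0`). Since `ℂ² ∖ {0}` is open, closure there is the trace of closure in `ℂ²`. -/

open Complex Filter Topology

theorem closure_preimage_subtype_val_eq {X : Type*} [TopologicalSpace X] {p : X → Prop}
    (hp : IsOpen {x | p x}) {s t : Set X} (hst : s ⊆ t) (ht : IsClosed t)
    (h : ∀ x, p x → x ∈ t → x ∈ closure s) :
    closure (Subtype.val ⁻¹' s : Set {x // p x}) = Subtype.val ⁻¹' t := by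
  ext ⟨x, hx⟩
  rw [closure_subtype, Set.image_preimage_eq_inter_range, Subtype.range_coe_subtype]
  refine ⟨fun hx' => closure_minimal hst ht (closure_mono Set.inter_subset_left hx'),
    fun hxt => ?_⟩
  rw [Set.inter_comm]
  exact hp.inter_closure ⟨hx, h x hx hxt⟩

theorem continuous_tau : Continuous tau := by
  unfold tau
  fun_prop

noncomputable def twist (ε : ℝ) (v : Fin 2 → ℂ) : Fin 2 → ℂ :=
  v + (ε * I) • ![v 1, -v 0]

theorem tau_twist (ε : ℝ) (v : Fin 2 → ℂ) :
    tau (twist ε v) = (1 + ε ^ 2) * tau v + ε * (normSq (v 0) + normSq (v 1)) := by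
  simp only [tau, twist, Pi.add_apply, Pi.smul_apply, Matrix.cons_val_zero, Matrix.cons_val_one,
    smul_eq_mul, map_add, map_neg, map_mul, conj_ofReal, conj_I, add_im, mul_im, mul_re, ofReal_re,
    ofReal_im, I_re, I_im, neg_re, neg_im, conj_re, conj_im, add_re, normSq_apply]
  ring

theorem tendsto_twist (v : Fin 2 → ℂ) : Tendsto (fun ε => twist ε v) (𝓝 0) (𝓝 v) := by
  have : Continuous fun ε => twist ε v := by unfold twist; fun_prop
  simpa [twist] using this.tendsto 0

theorem normSq_add_normSq_pos {v : Fin 2 → ℂ} (hv : v ≠ 0) :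
    0 < normSq (v 0) + normSq (v 1) := by
  have h0 := normSq_nonneg (v 0)
  have h1 := normSq_nonneg (v 1)
  contrapose! hv
  ext i
  fin_cases i
  · exact normSq_eq_zero.1 (by linarith : normSq (v 0) = 0)
  · exact normSq_eq_zero.1 (by linarith : normSq (v 1) = 0)

theorem mem_closure_tau_pos {v : Fin 2 → ℂ} (hv : v ≠ 0) (h : 0 ≤ tau v) :
    v ∈ closure {w | 0 < tau w} := by
  refine mem_closure_of_tendsto
    ((tendsto_twist v).mono_left (nhdsWithin_le_nhds (s := Set.Ioi 0))) ?_
  filter_upwards [self_mem_nhdsWithin] with ε (hε : 0 < ε)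
  rw [tau_twist]
  have := normSq_add_normSq_pos hv
  positivity

theorem mem_closure_tau_neg {v : Fin 2 → ℂ} (hv : v ≠ 0) (h : tau v ≤ 0) :
    v ∈ closure {w | tau w < 0} := by
  refine mem_closure_of_tendsto
    ((tendsto_twist v).mono_left (nhdsWithin_le_nhds (s := Set.Iio 0))) ?_
  filter_upwards [self_mem_nhdsWithin] with ε (hε : ε < 0)
  rw [tau_twist]
  have := normSq_add_normSq_pos hv
  nlinarith [mul_nonpos_of_nonneg_of_nonpos (by positivity : (0:ℝ) ≤ 1 + ε ^ 2) h]

/-- Inside the subspace `ℂ² ∖ {0}`, the closure of `{τ > 0}` is `{τ ≥ 0}`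
and the closure of `{τ < 0}` is `{τ ≤ 0}`. -/
theorem closure_tau_halves :
    closure ((Subtype.val ⁻¹' {v : Fin 2 → ℂ | 0 < tau v}) :
        Set {v : Fin 2 → ℂ // v ≠ 0})
      = Subtype.val ⁻¹' {v : Fin 2 → ℂ | 0 ≤ tau v} ∧
    closure ((Subtype.val ⁻¹' {v : Fin 2 → ℂ | tau v < 0}) :
        Set {v : Fin 2 → ℂ // v ≠ 0})
      = Subtype.val ⁻¹' {v : Fin 2 → ℂ | tau v ≤ 0} :=
  ⟨closure_preimage_subtype_val_eq isOpen_ne (Set.ofPred_subset_ofPred.2 fun _ => le_of_lt)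
      (isClosed_le continuous_const continuous_tau) fun _ => mem_closure_tau_pos,
    closure_preimage_subtype_val_eq isOpen_ne (Set.ofPred_subset_ofPred.2 fun _ => le_of_lt)
      (isClosed_le continuous_tau continuous_const) fun _ => mem_closure_tau_neg⟩
end

section
/- Each of the three sets {v ∈ ℂ² ∖ {0} : τ(v) > 0}, {v ∈ ℂ² ∖ {0} : τ(v) < 0}, and {v ∈ ℂ² ∖ {0} : τ(v) = 0} is preconnected (as a subset of ℂ² ∖ {0} with the subspace topology). -/
open Complex Set

private lemma range_preconnected {X : Type*} [TopologicalSpace X] [PreconnectedSpace X]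
    (f : X → (Fin 2 → ℂ)) (hf : Continuous f) {S : Set (Fin 2 → ℂ)}
    (h : range f = S) : IsPreconnected S := by
  rw [← h, ← image_univ]
  exact isPreconnected_univ.image f hf.continuousOn

private lemma cont_pair {X : Type*} [TopologicalSpace X] {f g : X → ℂ}
    (hf : Continuous f) (hg : Continuous g) : Continuous fun x => ![f x, g x] := by
  apply continuous_pi; intro i; fin_cases i <;> simpa

private lemma tau_pair (a b : ℂ) : tau ![a, b] = (a * (starRingEnd ℂ) b).im := by
  simp [tau]

private lemma ne_zero_of_one (v : Fin 2 → ℂ) (h : v 1 ≠ 0) : v ≠ 0 :=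
  fun hv => h (by rw [hv]; rfl)

private lemma eta2 (v : Fin 2 → ℂ) : ![v 0, v 1] = v := by
  funext i; fin_cases i <;> rfl

private lemma tau_eq_zero_of_snd (v : Fin 2 → ℂ) (h : v 1 = 0) : tau v = 0 := by
  simp [tau, h]

private lemma im_div (v : Fin 2 → ℂ) (_hv1 : v 1 ≠ 0) :
    (v 0 / v 1).im = tau v / normSq (v 1) := by
  rw [Complex.div_im, tau, Complex.mul_im]
  simp only [Complex.conj_re, Complex.conj_im]
  ring

/-- key parametrization for sign condition -/
private lemma halfsign (ε : ℝ) (hε : ε = 1 ∨ ε = -1) :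
    range (fun p : ℝ × ℝ × ℂ =>
      ![((p.1 : ℂ) + (ε : ℂ) * Real.exp p.2.1 * I) * Complex.exp p.2.2, Complex.exp p.2.2])
    = {v : Fin 2 → ℂ | v ≠ 0 ∧ 0 < ε * tau v} := by
  ext v
  constructor
  · rintro ⟨⟨x, y, c⟩, rfl⟩
    dsimp only
    constructor
    · exact ne_zero_of_one _ (by simp [Complex.exp_ne_zero])
    · rw [tau_pair, mul_assoc, Complex.mul_conj]
      have h1 : 0 < normSq (Complex.exp c) := normSq_pos.2 (Complex.exp_ne_zero c)
      have h2 : (0:ℝ) < Real.exp y := Real.exp_pos y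
      simp only [Complex.add_im, Complex.mul_im, Complex.ofReal_im, Complex.ofReal_re,
        Complex.I_im, Complex.I_re, Complex.mul_re, mul_zero, zero_mul, mul_one,
        sub_zero, add_zero, zero_add, one_mul]
      rcases hε with h | h <;> subst h <;> nlinarith
  · rintro ⟨hv, hτ⟩
    have hv1 : v 1 ≠ 0 := by
      intro h
      rw [tau_eq_zero_of_snd v h] at hτ
      simp at hτ
    have hnsq : 0 < normSq (v 1) := normSq_pos.2 hv1
    set z := v 0 / v 1 with hz
    have him : z.im = tau v / normSq (v 1) := im_div v hv1
    have hpos : 0 < ε * z.im := by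
      have : ε * z.im = (ε * tau v) / normSq (v 1) := by rw [him]; ring
      rw [this]
      exact div_pos hτ hnsq
    refine ⟨⟨z.re, Real.log (ε * z.im), Complex.log (v 1)⟩, ?_⟩
    dsimp only
    rw [Complex.exp_log hv1, Real.exp_log hpos]
    have hε2 : (ε : ℂ) * ((ε * z.im : ℝ) : ℂ) = (z.im : ℂ) := by
      rcases hε with h | h <;> subst h <;> push_cast <;> ring
    have hzz : ((z.re : ℂ) + (ε : ℂ) * ((ε * z.im : ℝ) : ℂ) * I) = z := by
      rw [hε2]; exact Complex.re_add_im z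
    rw [hzz, hz, div_mul_cancel₀ (v 0) hv1, eta2]

private lemma pos_part :
    IsPreconnected {v : Fin 2 → ℂ | v ≠ 0 ∧ 0 < tau v} := by
  have := range_preconnected _
    (cont_pair (by fun_prop) (by fun_prop)) (halfsign 1 (Or.inl rfl))
  simpa using this

private lemma neg_part :
    IsPreconnected {v : Fin 2 → ℂ | v ≠ 0 ∧ tau v < 0} := by
  have := range_preconnected _
    (cont_pair (by fun_prop) (by fun_prop)) (halfsign (-1) (Or.inr rfl))
  have e : {v : Fin 2 → ℂ | v ≠ 0 ∧ 0 < (-1:ℝ) * tau v}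
      = {v : Fin 2 → ℂ | v ≠ 0 ∧ tau v < 0} := by
    ext v
    constructor <;> rintro ⟨h1, h2⟩ <;> exact ⟨h1, by linarith⟩
  rwa [e] at this

private lemma zero_part :
    IsPreconnected {v : Fin 2 → ℂ | v ≠ 0 ∧ tau v = 0} := by
  apply range_preconnected
    (fun p : ℝ × ℂ =>
      ![Complex.exp p.2 * (Real.cos p.1 : ℂ), Complex.exp p.2 * (Real.sin p.1 : ℂ)])
    (cont_pair (by fun_prop) (by fun_prop))
  ext v
  constructor
  · rintro ⟨⟨θ, c⟩, rfl⟩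
    dsimp only
    constructor
    · intro h
      have h0 := congrFun h 0
      have h1 := congrFun h 1
      simp only [Matrix.cons_val_zero, Matrix.cons_val_one, Matrix.head_cons, Pi.zero_apply,
        mul_eq_zero, Complex.exp_ne_zero, false_or, Complex.ofReal_eq_zero] at h0 h1
      nlinarith [Real.sin_sq_add_cos_sq θ]
    · rw [tau_pair]
      simp only [map_mul, Complex.conj_ofReal, Complex.mul_im]
      simp [Complex.mul_re, Complex.mul_im, Complex.conj_re, Complex.conj_im]
      ring
  · rintro ⟨hv, hτ⟩
    by_cases hv1 : v 1 = 0
    · have hv0 : v 0 ≠ 0 := by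
        intro h0
        apply hv
        funext i; fin_cases i <;> simp [h0, hv1]
      refine ⟨⟨0, Complex.log (v 0)⟩, ?_⟩
      dsimp only
      rw [Complex.exp_log hv0]
      have : ![v 0 * ((Real.cos 0 : ℝ) : ℂ), v 0 * ((Real.sin 0 : ℝ) : ℂ)] = ![v 0, v 1] := by
        simp [hv1]
      rw [this, eta2]
    · set z := v 0 / v 1 with hz
      have him : z.im = 0 := by
        rw [hz, im_div v hv1, hτ, zero_div]
      set x := z.re with hx
      set r := Real.sqrt (x ^ 2 + 1) with hr
      have hr0 : 0 < r := Real.sqrt_pos.2 (by positivity)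
      have hru : ‖(x : ℂ) + I‖ = r := by
        rw [hr, Complex.norm_def, Complex.normSq_apply]
        simp
        ring_nf
      obtain ⟨θ, hθ⟩ := (Complex.norm_eq_one_iff _).1
        (show ‖((x : ℂ) + I) / (r : ℂ)‖ = 1 by
          rw [norm_div, hru, Complex.norm_real, Real.norm_eq_abs, abs_of_pos hr0, div_self hr0.ne'])
      have hcosr : Real.cos θ = x / r := by
        have h := congrArg Complex.re hθ
        simpa [Complex.exp_mul_I, Complex.div_ofReal_re, Complex.cos_ofReal_re] using h
      have hsinr : Real.sin θ = 1 / r := by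
        have h := congrArg Complex.im hθ
        simpa [Complex.exp_mul_I, Complex.div_ofReal_im, Complex.sin_ofReal_re] using h
      have hrc : (r : ℂ) ≠ 0 := by exact_mod_cast hr0.ne'
      refine ⟨⟨θ, Complex.log ((r : ℂ) * v 1)⟩, ?_⟩
      dsimp only
      have hrv : ((r : ℂ) * v 1) ≠ 0 := mul_ne_zero hrc hv1
      rw [Complex.exp_log hrv, hcosr, hsinr]
      have hz0 : v 0 = (x : ℂ) * v 1 := by
        have hzx : z = (x : ℂ) := Complex.ext (by simp [hx]) (by simp [him])
        rw [hz, div_eq_iff hv1] at hzx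
        exact hzx
      have e0 : (r : ℂ) * v 1 * ((x / r : ℝ) : ℂ) = v 0 := by
        rw [hz0]
        push_cast
        field_simp
      have e1 : (r : ℂ) * v 1 * ((1 / r : ℝ) : ℂ) = v 1 := by
        push_cast
        field_simp
      rw [e0, e1, eta2]

/-- Each of the three sets `{τ > 0}`, `{τ < 0}`, `{τ = 0}` in `ℂ² ∖ {0}`
is preconnected. -/
theorem tau_orbits_preconnected :
    IsPreconnected {v : Fin 2 → ℂ | v ≠ 0 ∧ 0 < tau v} ∧
    IsPreconnected {v : Fin 2 → ℂ | v ≠ 0 ∧ tau v < 0} ∧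
    IsPreconnected {v : Fin 2 → ℂ | v ≠ 0 ∧ tau v = 0} :=
  ⟨pos_part, neg_part, zero_part⟩
end

section
/- Let N = {v ∈ ℂ² ∖ {0} : v₀² + v₁² = 0} be the punctured null cone of the complex quadratic form v₀² + v₁². Then N is closed in the subspace ℂ² ∖ {0}, N is invariant under scalar multiplication by ℂˣ, N is invariant under every matrix g ∈ SL(2,ℂ) satisfying gᵀ g = 1 (i.e. under SO(2,ℂ)), and yet N is NOT preconnected. -/
/-!
The form `v₀² + v₁²` is the dot product `v ⬝ᵥ v`, which is preserved by every `g` with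
`gᵀ g = 1` and rescaled by `c²` under `v ↦ c • v`. Over `ℂ` it factors as
`(v₀ + i v₁)(v₀ - i v₁)`, so the punctured null cone is the union of two punctured complex lines
meeting only at the removed origin; these lines are relatively closed, so they disconnect the cone.
-/

open Matrix

section NullCone

variable {R n : Type*} [CommRing R] [Fintype n]

variable (R n) in
def nullCone : Set (n → R) := {v | v ≠ 0 ∧ v ⬝ᵥ v = 0}

theorem smul_mem_nullCone (u : Rˣ) {v : n → R} (hv : v ∈ nullCone R n) :
    (u : R) • v ∈ nullCone R n := by
  refine ⟨fun h => hv.1 ((smul_eq_zero_iff_eq u).1 h), ?_⟩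
  rw [smul_dotProduct, dotProduct_smul, hv.2, smul_zero, smul_zero]

variable [DecidableEq n] {A : Matrix n n R}

theorem mulVec_dotProduct_mulVec_of_transpose_mul_self (hA : Aᵀ * A = 1) (v : n → R) :
    (A *ᵥ v) ⬝ᵥ (A *ᵥ v) = v ⬝ᵥ v := by
  rw [dotProduct_mulVec, ← vecMul_transpose, vecMul_vecMul, hA, vecMul_one]

theorem mulVec_mem_nullCone (hA : Aᵀ * A = 1) {v : n → R} (hv : v ∈ nullCone R n) :
    A *ᵥ v ∈ nullCone R n := by
  refine ⟨fun h => hv.1 ?_, by rw [mulVec_dotProduct_mulVec_of_transpose_mul_self hA, hv.2]⟩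
  rw [← one_mulVec v, ← hA, ← mulVec_mulVec, h, mulVec_zero]

end NullCone

theorem setOf_sq_add_sq_eq_nullCone {R : Type*} [CommRing R] :
    {v : Fin 2 → R | v ≠ 0 ∧ v 0 ^ 2 + v 1 ^ 2 = 0} = nullCone R (Fin 2) := by
  simp only [nullCone, dotProduct, Fin.sum_univ_two, sq]

theorem not_isPreconnected_nullCone_fin_two : ¬ IsPreconnected (nullCone ℂ (Fin 2)) := by
  set A := {v : Fin 2 → ℂ | v 0 + Complex.I * v 1 = 0}
  set B := {v : Fin 2 → ℂ | v 0 - Complex.I * v 1 = 0}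
  have hA : IsClosed A := isClosed_eq (by fun_prop) continuous_const
  have hB : IsClosed B := isClosed_eq (by fun_prop) continuous_const
  have hcover : nullCone ℂ (Fin 2) ⊆ A ∪ B := by
    rintro v ⟨-, hv⟩
    simp only [dotProduct, Fin.sum_univ_two] at hv
    refine mul_eq_zero.1 (?_ : (v 0 + Complex.I * v 1) * (v 0 - Complex.I * v 1) = 0)
    linear_combination hv - v 1 ^ 2 * Complex.I_sq
  have hdisj : nullCone ℂ (Fin 2) ∩ (A ∩ B) = ∅ := by
    refine Set.eq_empty_of_forall_notMem fun v ⟨⟨hv, _⟩, (hvA : v 0 + _ = 0), (hvB : v 0 - _ = 0)⟩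
      => hv ?_
    have h0 : v 0 = 0 := by linear_combination (hvA + hvB) / 2
    have h1 : v 1 = 0 := by simpa [h0, Complex.I_ne_zero] using hvA
    ext i; fin_cases i <;> assumption
  intro h
  rcases isPreconnected_iff_subset_of_disjoint_closed.1 h A B hA hB hcover hdisj with hsub | hsub
  · have := hsub (show ![1, -Complex.I] ∈ nullCone ℂ (Fin 2) from ⟨by simp, by simp [dotProduct]⟩)
    norm_num [A] at this
  · have := hsub (show ![1, Complex.I] ∈ nullCone ℂ (Fin 2) from ⟨by simp, by simp [dotProduct]⟩)
    norm_num [B] at this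

/-- The punctured null cone `N = {v ∈ ℂ² ∖ {0} : v₀² + v₁² = 0}` is closed in
the subspace `ℂ² ∖ {0}`, stable under `ℂˣ` and under `SO(2,ℂ) ⊂ SL(2,ℂ)`,
but NOT preconnected (Remark 2.4). -/
theorem null_cone_not_preconnected :
    IsClosed ((Subtype.val ⁻¹' {v : Fin 2 → ℂ | v 0 ^ 2 + v 1 ^ 2 = 0}) :
        Set {v : Fin 2 → ℂ // v ≠ 0}) ∧
    (∀ (l : ℂˣ), ∀ v ∈ {v : Fin 2 → ℂ | v ≠ 0 ∧ v 0 ^ 2 + v 1 ^ 2 = 0},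
        (l : ℂ) • v ∈ {v : Fin 2 → ℂ | v ≠ 0 ∧ v 0 ^ 2 + v 1 ^ 2 = 0}) ∧
    (∀ (g : Matrix.SpecialLinearGroup (Fin 2) ℂ),
        (g : Matrix (Fin 2) (Fin 2) ℂ)ᵀ * (g : Matrix (Fin 2) (Fin 2) ℂ) = 1 →
        ∀ v ∈ {v : Fin 2 → ℂ | v ≠ 0 ∧ v 0 ^ 2 + v 1 ^ 2 = 0},
          (g : Matrix (Fin 2) (Fin 2) ℂ) *ᵥ v
            ∈ {v : Fin 2 → ℂ | v ≠ 0 ∧ v 0 ^ 2 + v 1 ^ 2 = 0}) ∧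
    ¬ IsPreconnected {v : Fin 2 → ℂ | v ≠ 0 ∧ v 0 ^ 2 + v 1 ^ 2 = 0} := by
  rw [setOf_sq_add_sq_eq_nullCone]
  exact ⟨(isClosed_eq (by fun_prop) continuous_const).preimage continuous_subtype_val,
    fun l _ hv => smul_mem_nullCone l hv, fun g hg _ hv => mulVec_mem_nullCone hg hv,
    not_isPreconnected_nullCone_fin_two⟩
end
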